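/- Let X = ⋂_{n=0}^∞ (Xₙ, ‖·‖ₙ) and Y = ⋂_{n=0}^∞ (Yₙ, |·|ₙ) be compactly graded spaces. Let f : X → Y be continuous, directionally differentiable at every point, with f(0) = 0, and assume there are constants cₙ > 0 (n ≥ 0) such that for each x ∈ X and each v ∈ Y there exists u ∈ X with f'(x; u) = v and ‖u‖ₙ ≤ cₙ|v|ₙ for all n ≥ 0. Set b := (cₙ^{-1})ₙ₌₀^∞. Then for every s ∈ ℝ₊^∞, every ȳ ∈ Π_{b·s}(Y), every n ≥ 0, every ε > 0 and every t ≥ 0, one has dₙ(t·ȳ, f(t·Π_s(X))) ≤ t·ε, where dₙ(y, A) := inf{|y − w|ₙ : w ∈ A} and t·A := {t·a : a ∈ A}. -/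
import Mathlib


open Filter Topology
open scoped ENNReal Pointwise

noncomputable section

/-- Monotonicity of `t ↦ t / (1 + t)` on nonnegative reals. -/
lemma gradedG_mono {a b : ℝ} (ha : 0 ≤ a) (hab : a ≤ b) :
    a / (1 + a) ≤ b / (1 + b) := by
  rw [div_le_div_iff₀ (by linarith) (by linarith)]
  nlinarith

/-- Subadditivity of `t ↦ t / (1 + t)` on nonnegative reals. -/
lemma gradedG_subadd {a b : ℝ} (ha : 0 ≤ a) (hb : 0 ≤ b) :
    (a + b) / (1 + (a + b)) ≤ a / (1 + a) + b / (1 + b) := by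
  have h1 : (0:ℝ) < 1 + a := by linarith
  have h2 : (0:ℝ) < 1 + b := by linarith
  have h3 : (0:ℝ) < 1 + (a + b) := by linarith
  rw [div_add_div _ _ h1.ne' h2.ne', div_le_div_iff₀ h3 (by positivity)]
  nlinarith [mul_nonneg ha hb, mul_nonneg (mul_nonneg ha hb) ha,
    mul_nonneg (mul_nonneg ha hb) hb]

variable (E : ℕ → Type) [∀ n, NormedAddCommGroup (E n)] [∀ n, NormedSpace ℝ (E n)]
variable (J : ∀ n, E (n + 1) →L[ℝ] E n)

/-- The inverse limit `X = ⋂ₙ Xₙ` of the system of inclusions `Jₙ : Xₙ₊₁ → Xₙ`,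
as a submodule of the product `∏ₙ Xₙ`. -/
def invLimSubmodule : Submodule ℝ (∀ n, E n) where
  carrier := {x | ∀ n, J n (x (n + 1)) = x n}
  add_mem' := by intro a b ha hb n; simp [ha n, hb n]
  zero_mem' := by intro n; simp
  smul_mem' := by intro c a ha n; simp [ha n]

/-- The inverse limit as a type; its elements carry all the norms `‖x.1 n‖`. -/
def InvLim : Type _ := ↥(invLimSubmodule E J)

instance : AddCommGroup (InvLim E J) :=
  inferInstanceAs (AddCommGroup ↥(invLimSubmodule E J))

instance : Module ℝ (InvLim E J) :=
  inferInstanceAs (Module ℝ ↥(invLimSubmodule E J))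

variable {E J}

/-- `n`-th term in the defining formula for the metric `ρ_X`. -/
def rhoTerm (x y : InvLim E J) (n : ℕ) : ℝ :=
  (2 : ℝ)⁻¹ ^ n * (‖x.1 n - y.1 n‖ / (1 + ‖x.1 n - y.1 n‖))

/-- The translation-invariant metric
`ρ_X(x,y) = max_n 2⁻ⁿ ‖x-y‖ₙ / (1 + ‖x-y‖ₙ)` on the inverse limit. -/
def rho (x y : InvLim E J) : ℝ := ⨆ n, rhoTerm x y n

lemma rhoTerm_nonneg (x y : InvLim E J) (n : ℕ) : 0 ≤ rhoTerm x y n := by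
  unfold rhoTerm; positivity

lemma rhoTerm_le_one (x y : InvLim E J) (n : ℕ) : rhoTerm x y n ≤ 1 := by
  unfold rhoTerm
  have h0 : (0:ℝ) ≤ ‖x.1 n - y.1 n‖ := norm_nonneg _
  have h1 : ‖x.1 n - y.1 n‖ / (1 + ‖x.1 n - y.1 n‖) ≤ 1 := by
    rw [div_le_one (by linarith)]; linarith
  have h2 : ((2:ℝ)⁻¹) ^ n ≤ 1 := pow_le_one₀ (by norm_num) (by norm_num)
  have h3 : (0:ℝ) ≤ ((2:ℝ)⁻¹) ^ n := by positivity
  nlinarith [div_nonneg h0 (by linarith : (0:ℝ) ≤ 1 + ‖x.1 n - y.1 n‖)]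

lemma rho_bddAbove (x y : InvLim E J) : BddAbove (Set.range (rhoTerm x y)) := by
  refine ⟨1, ?_⟩
  rintro r ⟨n, rfl⟩
  exact rhoTerm_le_one x y n

lemma rhoTerm_triangle (x y z : InvLim E J) (n : ℕ) :
    rhoTerm x z n ≤ rhoTerm x y n + rhoTerm y z n := by
  unfold rhoTerm
  set a := ‖x.1 n - y.1 n‖ with ha
  set b := ‖y.1 n - z.1 n‖ with hb
  have ha0 : 0 ≤ a := norm_nonneg _
  have hb0 : 0 ≤ b := norm_nonneg _
  have hxz : ‖x.1 n - z.1 n‖ ≤ a + b := by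
    simpa [dist_eq_norm, ha, hb] using dist_triangle (x.1 n) (y.1 n) (z.1 n)
  have step1 : ‖x.1 n - z.1 n‖ / (1 + ‖x.1 n - z.1 n‖) ≤ (a + b) / (1 + (a + b)) :=
    gradedG_mono (norm_nonneg _) hxz
  have step2 := gradedG_subadd ha0 hb0
  have hw : (0:ℝ) ≤ (2:ℝ)⁻¹ ^ n := by positivity
  calc (2:ℝ)⁻¹ ^ n * (‖x.1 n - z.1 n‖ / (1 + ‖x.1 n - z.1 n‖))
      ≤ (2:ℝ)⁻¹ ^ n * (a / (1 + a) + b / (1 + b)) :=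
        mul_le_mul_of_nonneg_left (step1.trans step2) hw
    _ = (2:ℝ)⁻¹ ^ n * (a / (1 + a)) + (2:ℝ)⁻¹ ^ n * (b / (1 + b)) := mul_add _ _ _

instance : MetricSpace (InvLim E J) where
  dist x y := rho x y
  dist_self x := by
    have h : ∀ n, rhoTerm x x n = 0 := by intro n; simp [rhoTerm]
    show rho x x = 0
    unfold rho
    simp [h]
  dist_comm x y := by
    show rho x y = rho y x
    unfold rho rhoTerm
    congr 1
    funext n
    rw [norm_sub_rev]
  dist_triangle x y z := by
    show rho x z ≤ rho x y + rho y z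
    refine ciSup_le fun n => ?_
    calc rhoTerm x z n ≤ rhoTerm x y n + rhoTerm y z n := rhoTerm_triangle x y z n
      _ ≤ rho x y + rho y z :=
        add_le_add (le_ciSup (rho_bddAbove x y) n) (le_ciSup (rho_bddAbove y z) n)
  eq_of_dist_eq_zero := by
    intro x y h
    have hxy : ∀ n, x.1 n = y.1 n := by
      intro n
      have h1 : rhoTerm x y n ≤ 0 := by
        have := le_ciSup (rho_bddAbove x y) n
        change rhoTerm x y n ≤ rho x y at this
        rwa [show rho x y = 0 from h] at this
      have h3 : rhoTerm x y n = 0 := le_antisymm h1 (rhoTerm_nonneg x y n)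
      unfold rhoTerm at h3
      have hw : (0:ℝ) < (2:ℝ)⁻¹ ^ n := by positivity
      have h4 : ‖x.1 n - y.1 n‖ / (1 + ‖x.1 n - y.1 n‖) = 0 := by
        rcases mul_eq_zero.1 h3 with h | h
        · exact absurd h hw.ne'
        · exact h
      have hd : (0:ℝ) < 1 + ‖x.1 n - y.1 n‖ := by positivity
      have h5 : ‖x.1 n - y.1 n‖ = 0 := by
        rcases div_eq_zero_iff.1 h4 with h' | h'
        · exact h'
        · exact absurd h' hd.ne'
      have := norm_eq_zero.1 h5
      exact sub_eq_zero.1 this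
    exact Subtype.ext (funext hxy)

variable (E J)

/-- `Π_s(X) = {x ∈ X : ‖x‖ₙ ≤ sₙ for all n}`. -/
def PiSet (s : ℕ → ℝ) : Set (InvLim E J) := {x | ∀ n, ‖x.1 n‖ ≤ s n}

end

section Aux

open Filter Topology

variable {E : ℕ → Type} [∀ n, NormedAddCommGroup (E n)] [∀ n, NormedSpace ℝ (E n)]
variable {J : ∀ n, E (n + 1) →L[ℝ] E n}

lemma invLim_add_coe (x y : InvLim E J) (m : ℕ) : (x + y).1 m = x.1 m + y.1 m := rfl

lemma invLim_sub_coe (x y : InvLim E J) (m : ℕ) : (x - y).1 m = x.1 m - y.1 m := rfl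

lemma invLim_smul_coe (a : ℝ) (x : InvLim E J) (m : ℕ) : (a • x).1 m = a • x.1 m := rfl

lemma invLim_zero_coe (m : ℕ) : (0 : InvLim E J).1 m = 0 := rfl

lemma invLim_dist (x y : InvLim E J) : dist x y = rho x y := rfl

/-- Each `rhoTerm` is bounded by the corresponding coordinate norm. -/
lemma rhoTerm_le_norm (x y : InvLim E J) (m : ℕ) :
    rhoTerm x y m ≤ ‖x.1 m - y.1 m‖ := by
  unfold rhoTerm
  set d := ‖x.1 m - y.1 m‖ with hd
  have hd0 : 0 ≤ d := norm_nonneg _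
  have h1 : d / (1 + d) ≤ d := by
    rw [div_le_iff₀ (by linarith)]; nlinarith
  have h2 : (2:ℝ)⁻¹ ^ m ≤ 1 := pow_le_one₀ (by norm_num) (by norm_num)
  nlinarith [div_nonneg hd0 (by linarith : (0:ℝ) ≤ 1 + d)]

/-- Convergence in the metric of `InvLim` implies coordinatewise convergence. -/
lemma tendsto_coord {α : Type*} {l : Filter α} {u : α → InvLim E J} {x : InvLim E J}
    (h : Tendsto u l (𝓝 x)) (m : ℕ) :
    Tendsto (fun a => (u a).1 m) l (𝓝 (x.1 m)) := by
  rw [Metric.tendsto_nhds] at h ⊢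
  intro ε hε
  have hδ : (0:ℝ) < (2:ℝ)⁻¹ ^ m * (ε / (1 + ε)) := by positivity
  filter_upwards [h _ hδ] with a ha
  rw [dist_eq_norm]
  by_contra hcon
  push_neg at hcon
  have h1 : rhoTerm (u a) x m ≤ dist (u a) x := le_ciSup (rho_bddAbove _ _) m
  have h2 : ε / (1 + ε) ≤ ‖(u a).1 m - x.1 m‖ / (1 + ‖(u a).1 m - x.1 m‖) :=
    gradedG_mono hε.le hcon
  have h3 : (2:ℝ)⁻¹ ^ m * (ε / (1 + ε)) ≤ rhoTerm (u a) x m := by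
    unfold rhoTerm
    exact mul_le_mul_of_nonneg_left h2 (by positivity)
  linarith [lt_of_le_of_lt (h3.trans h1) ha]

/-- Coordinatewise convergence implies convergence in the metric of `InvLim`. -/
lemma tendsto_of_coord {α : Type*} {l : Filter α} {u : α → InvLim E J} {x : InvLim E J}
    (h : ∀ m, Tendsto (fun a => (u a).1 m) l (𝓝 (x.1 m))) :
    Tendsto u l (𝓝 x) := by
  rw [Metric.tendsto_nhds]
  intro ε hε
  obtain ⟨N, hN⟩ : ∃ N : ℕ, (2:ℝ)⁻¹ ^ N ≤ ε / 2 := by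
    obtain ⟨N, hN⟩ := exists_pow_lt_of_lt_one (by positivity : (0:ℝ) < ε / 2)
      (by norm_num : (2:ℝ)⁻¹ < 1)
    exact ⟨N, hN.le⟩
  have hsmall : ∀ m : ℕ, m ∈ Finset.range N → ∀ᶠ a in l, ‖(u a).1 m - x.1 m‖ ≤ ε / 2 := by
    intro m _
    have hnorm : Tendsto (fun a => ‖(u a).1 m - x.1 m‖) l (𝓝 ‖x.1 m - x.1 m‖) := by
      exact (Tendsto.sub (h m) tendsto_const_nhds).norm
    rw [sub_self, norm_zero] at hnorm
    have := hnorm.eventually (eventually_le_nhds (by positivity : (0:ℝ) < ε / 2))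
    exact this
  rw [← Filter.eventually_all_finset] at hsmall
  filter_upwards [hsmall] with a ha
  have hle : dist (u a) x ≤ ε / 2 := by
    refine ciSup_le fun m => ?_
    rcases lt_or_ge m N with hm | hm
    · exact (rhoTerm_le_norm _ _ m).trans (ha m (Finset.mem_range.2 hm))
    · calc rhoTerm (u a) x m ≤ (2:ℝ)⁻¹ ^ m * 1 := by
            have h0 : (0:ℝ) ≤ ‖(u a).1 m - x.1 m‖ := norm_nonneg _
            unfold rhoTerm
            refine mul_le_mul_of_nonneg_left ?_ (by positivity)
            rw [div_le_one (by linarith)]; linarith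
        _ = (2:ℝ)⁻¹ ^ m := mul_one _
        _ ≤ (2:ℝ)⁻¹ ^ N := pow_le_pow_of_le_one (by norm_num) (by norm_num) hm
        _ ≤ ε / 2 := hN
  calc dist (u a) x ≤ ε / 2 := hle
    _ < ε := by linarith

/-- Joint (sequential-style) continuity of scalar multiplication on `InvLim`. -/
lemma tendsto_smul_invLim {α : Type*} {l : Filter α} {τ : α → ℝ} {a : ℝ}
    {u : α → InvLim E J} {x : InvLim E J}
    (hτ : Tendsto τ l (𝓝 a)) (hu : Tendsto u l (𝓝 x)) :
    Tendsto (fun i => τ i • u i) l (𝓝 (a • x)) := by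
  refine tendsto_of_coord fun m => ?_
  have : Tendsto (fun i => τ i • (u i).1 m) l (𝓝 (a • x.1 m)) :=
    hτ.smul (tendsto_coord hu m)
  simpa [invLim_smul_coe] using this

/-- `Π_s(X)` is compact in the inverse-limit metric, thanks to compactness of the
inclusion operators. -/
lemma isCompact_piSet (hJcpt : ∀ n, IsCompactOperator (J n)) (s : ℕ → ℝ) :
    IsCompact (PiSet E J s) := by
  rw [isCompact_iff_ultrafilter_le_nhds]
  intro F hF
  have hmem : PiSet E J s ∈ F := le_principal_iff.1 hF
  -- each coordinate lives in a compact set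
  set Kc : ∀ m, Set (E m) := fun m =>
    closure ((J m) '' Metric.closedBall 0 (s (m + 1))) with hKc
  have hKcpt' : ∀ m, IsCompact (Kc m) := by
    intro m
    exact IsCompactOperator.isCompact_closure_image_of_bounded (𝕜₁ := ℝ) (𝕜₂ := ℝ)
      (f := (J m).toLinearMap) (by simpa using hJcpt m) Metric.isBounded_closedBall
  have hmem' : ∀ m, ∀ x ∈ PiSet E J s, x.1 m ∈ Kc m := by
    intro m x hx
    have h1 : x.1 (m + 1) ∈ Metric.closedBall (0 : E (m+1)) (s (m+1)) := by
      rw [Metric.mem_closedBall, dist_zero_right]; exact hx (m+1)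
    have h2 : (J m) (x.1 (m+1)) = x.1 m := x.2 m
    exact subset_closure ⟨x.1 (m+1), h1, h2⟩
  -- limits of coordinates
  have hlim : ∀ m, ∃ z : E m, z ∈ Kc m ∧
      Tendsto (fun x : InvLim E J => x.1 m) F (𝓝 z) := by
    intro m
    have hKm : Kc m ∈ Filter.map (fun x : InvLim E J => x.1 m) F :=
      Filter.mem_map.2 (Filter.mem_of_superset hmem (fun x hx => hmem' m x hx))
    obtain ⟨z, hz, hz'⟩ := (isCompact_iff_ultrafilter_le_nhds.1 (hKcpt' m))
      (F.map (fun x : InvLim E J => x.1 m)) (le_principal_iff.2 hKm)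
    exact ⟨z, hz, hz'⟩
  choose z hz hzt using hlim
  have hcompat : ∀ m, (J m) (z (m + 1)) = z m := by
    intro m
    have h1 : Tendsto (fun x : InvLim E J => (J m) (x.1 (m+1))) F (𝓝 ((J m) (z (m+1)))) :=
      ((J m).continuous.tendsto _).comp (hzt (m+1))
    have h2 : Tendsto (fun x : InvLim E J => (J m) (x.1 (m+1))) F (𝓝 (z m)) := by
      refine (hzt m).congr' ?_
      filter_upwards [hmem] with x hx
      exact (x.2 m).symm
    exact tendsto_nhds_unique h1 h2
  have hnorm : ∀ m, ‖z m‖ ≤ s m := by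
    intro m
    refine le_of_tendsto (hzt m).norm ?_
    filter_upwards [hmem] with x hx using hx m
  refine ⟨⟨z, hcompat⟩, hnorm, ?_⟩
  exact tendsto_of_coord fun m => hzt m

end Aux

/-- under the hypotheses of the main theorem with `d = 0`, for every
`s ∈ ℝ₊^∞`, every `ȳ ∈ Π_{b·s}(Y)`, every `n`, `ε > 0` and `t ≥ 0`,
`dₙ(t·ȳ, f(t·Π_s(X))) ≤ t·ε`. -/
theorem nash_moser_ekeland_dist_estimate
    (E : ℕ → Type) [∀ n, NormedAddCommGroup (E n)] [∀ n, NormedSpace ℝ (E n)]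
    [∀ n, CompleteSpace (E n)]
    (J : ∀ n, E (n + 1) →L[ℝ] E n)
    (hJinj : ∀ n, Function.Injective (J n))
    (hJcpt : ∀ n, IsCompactOperator (J n))
    (F : ℕ → Type) [∀ n, NormedAddCommGroup (F n)] [∀ n, NormedSpace ℝ (F n)]
    [∀ n, CompleteSpace (F n)]
    (K : ∀ n, F (n + 1) →L[ℝ] F n)
    (hKinj : ∀ n, Function.Injective (K n))
    (hKcpt : ∀ n, IsCompactOperator (K n))
    (f : InvLim E J → InvLim F K) (hf : Continuous f) (hf0 : f 0 = 0)
    (D : InvLim E J → InvLim E J → InvLim F K)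
    (hD : ∀ x h : InvLim E J,
      Tendsto (fun t : ℝ => t⁻¹ • (f (x + t • h) - f x)) (𝓝[>] (0 : ℝ)) (𝓝 (D x h)))
    (c : ℕ → ℝ) (hc : ∀ n, 0 < c n)
    (hsol : ∀ x : InvLim E J, ∀ v : InvLim F K,
      ∃ u : InvLim E J, D x u = v ∧ ∀ n, ‖u.1 n‖ ≤ c n * ‖v.1 n‖)
    (s : ℕ → ℝ) (hs : ∀ n, 0 ≤ s n)
    (ybar : InvLim F K) (hybar : ybar ∈ PiSet F K (fun n => (c n)⁻¹ * s n))
    (n : ℕ) (ε : ℝ) (hε : 0 < ε) (t : ℝ) (ht : 0 ≤ t) :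
    sInf {r : ℝ | ∃ w ∈ f '' (t • PiSet E J s), r = ‖(t • ybar).1 n - w.1 n‖} ≤ t * ε := by
    classical
  have hXcpt : IsCompact (PiSet E J s) := isCompact_piSet hJcpt s
  have h0X : (0 : InvLim E J) ∈ PiSet E J s := by
    intro m; simpa [invLim_zero_coe] using hs m
  set T : Set ℝ := {τ | τ ∈ Set.Icc 0 t ∧
    ∃ x ∈ PiSet E J s, ‖τ • ybar.1 n - (f (τ • x)).1 n‖ ≤ τ * ε} with hT
  have h0T : (0:ℝ) ∈ T := by
    refine ⟨⟨le_refl 0, ht⟩, 0, h0X, ?_⟩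
    simp [hf0, invLim_zero_coe]
  have hTne : T.Nonempty := ⟨0, h0T⟩
  have hTbdd : BddAbove T := ⟨t, fun τ hτ => hτ.1.2⟩
  set τs := sSup T with hτs
  have hτs_le : τs ≤ t := csSup_le hTne fun τ hτ => hτ.1.2
  have hτs_nonneg : 0 ≤ τs := le_csSup hTbdd h0T
  -- the supremum belongs to `T`
  have hτs_mem : τs ∈ T := by
    obtain ⟨σ, hσmono, hσtend, hσmem⟩ := exists_seq_tendsto_sSup hTne hTbdd
    choose xk hxkX hxk using fun k => (hσmem k).2
    obtain ⟨x, hxX, φ, hφ, hconv⟩ := hXcpt.tendsto_subseq hxkX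
    have hτφ : Tendsto (fun k => σ (φ k)) atTop (𝓝 τs) := hσtend.comp hφ.tendsto_atTop
    have h1 : Tendsto (fun k => σ (φ k) • xk (φ k)) atTop (𝓝 (τs • x)) :=
      tendsto_smul_invLim hτφ hconv
    have h2 : Tendsto (fun k => (f (σ (φ k) • xk (φ k))).1 n) atTop
        (𝓝 ((f (τs • x)).1 n)) := tendsto_coord ((hf.tendsto _).comp h1) n
    have h3 : Tendsto (fun k => ‖σ (φ k) • ybar.1 n - (f (σ (φ k) • xk (φ k))).1 n‖)
        atTop (𝓝 ‖τs • ybar.1 n - (f (τs • x)).1 n‖) :=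
      ((hτφ.smul tendsto_const_nhds).sub h2).norm
    have h4 : ‖τs • ybar.1 n - (f (τs • x)).1 n‖ ≤ τs * ε :=
      le_of_tendsto_of_tendsto' h3 (hτφ.mul_const ε) fun k => hxk (φ k)
    exact ⟨⟨hτs_nonneg, hτs_le⟩, x, hxX, h4⟩
  -- the supremum equals `t`
  have hτst : τs = t := by
    by_contra hne
    have hlt : τs < t := lt_of_le_of_ne hτs_le hne
    obtain ⟨⟨h0τ, _⟩, x, hxX, hx⟩ := hτs_mem
    obtain ⟨u, hDu, hu⟩ := hsol (τs • x) ybar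
    have huX : u ∈ PiSet E J s := by
      intro m
      calc ‖u.1 m‖ ≤ c m * ‖ybar.1 m‖ := hu m
        _ ≤ c m * ((c m)⁻¹ * s m) :=
            mul_le_mul_of_nonneg_left (hybar m) (hc m).le
        _ = s m := mul_inv_cancel_left₀ (hc m).ne' _
    have hDt := hD (τs • x) u
    rw [hDu] at hDt
    have hDn : Tendsto
        (fun h : ℝ => h⁻¹ • ((f (τs • x + h • u)).1 n - (f (τs • x)).1 n))
        (𝓝[>] 0) (𝓝 (ybar.1 n)) := by
      have := tendsto_coord hDt n
      simpa [invLim_smul_coe, invLim_sub_coe] using this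
    have hev1 : ∀ᶠ h in 𝓝[>] (0:ℝ),
        ‖h⁻¹ • ((f (τs • x + h • u)).1 n - (f (τs • x)).1 n) - ybar.1 n‖ ≤ ε := by
      have hball : Metric.closedBall (ybar.1 n) ε ∈ 𝓝 (ybar.1 n) :=
        Metric.closedBall_mem_nhds _ hε
      filter_upwards [hDn hball] with h hh
      rw [Set.mem_preimage, Metric.mem_closedBall, dist_eq_norm] at hh
      exact hh
    have hev2 : ∀ᶠ h in 𝓝[>] (0:ℝ), h < t - τs :=
      eventually_nhdsWithin_of_eventually_nhds
        (eventually_lt_nhds (by linarith : (0:ℝ) < t - τs))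
    have hev3 : ∀ᶠ h in 𝓝[>] (0:ℝ), (0:ℝ) < h := eventually_mem_nhdsWithin
    obtain ⟨h, hh1, hh2, hh3⟩ := (hev1.and (hev2.and hev3)).exists
    have hτh : 0 < τs + h := by linarith
    set x' := (τs + h)⁻¹ • (τs • x + h • u) with hx'def
    have hx'X : x' ∈ PiSet E J s := by
      intro m
      have hcoe : x'.1 m = (τs + h)⁻¹ • (τs • x.1 m + h • u.1 m) := rfl
      rw [hcoe, norm_smul, Real.norm_eq_abs, abs_of_pos (inv_pos.2 hτh)]
      have hb : ‖τs • x.1 m + h • u.1 m‖ ≤ (τs + h) * s m := by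
        calc ‖τs • x.1 m + h • u.1 m‖ ≤ ‖τs • x.1 m‖ + ‖h • u.1 m‖ := norm_add_le _ _
          _ = |τs| * ‖x.1 m‖ + |h| * ‖u.1 m‖ := by
              rw [norm_smul, norm_smul, Real.norm_eq_abs, Real.norm_eq_abs]
          _ ≤ τs * s m + h * s m := by
              rw [abs_of_nonneg h0τ, abs_of_pos hh3]
              exact add_le_add (mul_le_mul_of_nonneg_left (hxX m) h0τ)
                (mul_le_mul_of_nonneg_left (huX m) hh3.le)
          _ = (τs + h) * s m := by ring
      calc (τs + h)⁻¹ * ‖τs • x.1 m + h • u.1 m‖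
          ≤ (τs + h)⁻¹ * ((τs + h) * s m) :=
            mul_le_mul_of_nonneg_left hb (inv_pos.2 hτh).le
        _ = s m := inv_mul_cancel_left₀ hτh.ne' _
    have hrecomb : (τs + h) • x' = τs • x + h • u := by
      rw [hx'def, smul_smul, mul_inv_cancel₀ hτh.ne', one_smul]
    have hstep : ‖(f (τs • x + h • u)).1 n - (f (τs • x)).1 n - h • ybar.1 n‖ ≤ h * ε := by
      have h5 : ‖h • (h⁻¹ • ((f (τs • x + h • u)).1 n - (f (τs • x)).1 n) - ybar.1 n)‖
          ≤ h * ε := by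
        rw [norm_smul, Real.norm_eq_abs, abs_of_pos hh3]
        exact mul_le_mul_of_nonneg_left hh1 hh3.le
      rwa [smul_sub, smul_inv_smul₀ hh3.ne'] at h5
    have hkey : ‖(τs + h) • ybar.1 n - (f ((τs + h) • x')).1 n‖ ≤ (τs + h) * ε := by
      rw [hrecomb]
      have hid : (τs + h) • ybar.1 n - (f (τs • x + h • u)).1 n
          = (τs • ybar.1 n - (f (τs • x)).1 n)
            - ((f (τs • x + h • u)).1 n - (f (τs • x)).1 n - h • ybar.1 n) := by
        rw [add_smul]; abel
      calc ‖(τs + h) • ybar.1 n - (f (τs • x + h • u)).1 n‖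
          = ‖(τs • ybar.1 n - (f (τs • x)).1 n)
            - ((f (τs • x + h • u)).1 n - (f (τs • x)).1 n - h • ybar.1 n)‖ := by rw [hid]
        _ ≤ ‖τs • ybar.1 n - (f (τs • x)).1 n‖
            + ‖(f (τs • x + h • u)).1 n - (f (τs • x)).1 n - h • ybar.1 n‖ := norm_sub_le _ _
        _ ≤ τs * ε + h * ε := add_le_add hx hstep
        _ = (τs + h) * ε := by ring
    have hmemT : τs + h ∈ T := ⟨⟨by linarith, by linarith⟩, x', hx'X, hkey⟩
    have := le_csSup hTbdd hmemT
    linarith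
  -- conclude
  obtain ⟨_, x, hxX, hx⟩ := hτs_mem
  rw [hτst] at hx
  have hbdd : BddBelow {r : ℝ | ∃ w ∈ f '' (t • PiSet E J s), r = ‖(t • ybar).1 n - w.1 n‖} := by
    refine ⟨0, ?_⟩
    rintro r ⟨w, hw, rfl⟩
    exact norm_nonneg _
  have hmem : ‖(t • ybar).1 n - (f (t • x)).1 n‖
      ∈ {r : ℝ | ∃ w ∈ f '' (t • PiSet E J s), r = ‖(t • ybar).1 n - w.1 n‖} :=
    ⟨f (t • x), ⟨t • x, Set.smul_mem_smul_set hxX, rfl⟩, rfl⟩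
  calc sInf {r : ℝ | ∃ w ∈ f '' (t • PiSet E J s), r = ‖(t • ybar).1 n - w.1 n‖}
      ≤ ‖(t • ybar).1 n - (f (t • x)).1 n‖ := csInf_le hbdd hmem
    _ ≤ t * ε := by simpa [invLim_smul_coe] using hx
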